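/- On M = T² × ℝ with coordinates (x,y,z), with φ : ℝ → (−π/4, π/4) a diffeomorphism, the vector field X = ∂_y + ∂_z is nowhere orthogonal to the geodesic vector field Y = sin φ(z) ∂_x + cos φ(z) ∂_y (their inner product cos φ(z) is positive), and yet X is not proportional to the Reeb vector field of any contact form: if α were a contact form with R_α = λX for positive λ, then ∫_{T²×{0}} dα would have to be both positive and zero by Stokes' theorem, a contradiction. -/

import Mathlib

noncomputable section

open MeasureTheory

/-- Euclidean 3-space. -/
abbrev E3 : Type := ℝ × ℝ × ℝ

/-- Exterior derivative of a 1-form: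
`dα(x)(u,v) = ∂_u (α(·)(v))(x) - ∂_v (α(·)(u))(x)`. -/
def dOne (α : E3 → E3 →L[ℝ] ℝ) (x u v : E3) : ℝ :=
  fderiv ℝ (fun y => α y v) x u - fderiv ℝ (fun y => α y u) x v

/-- Wedge product of two 1-forms. -/
def wedge11 (α β : E3 → E3 →L[ℝ] ℝ) (x u v : E3) : ℝ :=
  α x u * β x v - α x v * β x u

/-- Wedge product of a 1-form with a 2-form; in particular `α ∧ dα` is
`wedge12 α (dOne α)`. -/
def wedge12 (α : E3 → E3 →L[ℝ] ℝ) (ω : E3 → E3 → E3 → ℝ) (x u v w : E3) : ℝ :=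
  α x u * ω x v w - α x v * ω x u w + α x w * ω x u v

def e1 : E3 := (1, 0, 0)
def e2 : E3 := (0, 1, 0)
def e3 : E3 := (0, 0, 1)

/-- Invariance under the lattice `2π ℤ³`: objects on the torus `T³ = ℝ³/(2πℤ)³`
are modelled as lattice-periodic objects on `ℝ³`. -/
def Periodic3 {β : Type*} (f : E3 → β) : Prop :=
  ∀ x : E3, f (x + (2 * Real.pi, 0, 0)) = f x ∧ f (x + (0, 2 * Real.pi, 0)) = f x ∧
    f (x + (0, 0, 2 * Real.pi)) = f x

/-- A fundamental domain of the torus `T³`. -/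
def cube : Set E3 :=
  Set.Icc 0 (2 * Real.pi) ×ˢ (Set.Icc 0 (2 * Real.pi) ×ˢ Set.Icc 0 (2 * Real.pi))

/-- Invariance under the lattice `2πℤ²` in the first two coordinates: objects
on `T² × ℝ` are modelled as such periodic objects on `ℝ³`. -/
def Periodic2 {β : Type*} (f : E3 → β) : Prop :=
  ∀ x : E3, f (x + (2 * Real.pi, 0, 0)) = f x ∧ f (x + (0, 2 * Real.pi, 0)) = f x

/-- The Euclidean inner product of the flat product metric on `T² × ℝ`. -/
def dot3 (u v : E3) : ℝ := u.1 * v.1 + u.2.1 * v.2.1 + u.2.2 * v.2.2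

/-- on `M = T² × ℝ` with `φ : ℝ → (−π/4, π/4)` a diffeomorphism,
the vector field `X = ∂_y + ∂_z` is nowhere orthogonal to the geodesic vector
field `Y = sin φ(z) ∂ₓ + cos φ(z) ∂_y` (their inner product is `cos φ(z) > 0`),
yet `X` is not positively proportional to the Reeb vector field of any contact
form on `M`. -/
theorem transverse_but_not_reeb (φ : ℝ → ℝ) (hφsm : ContDiff ℝ (⊤ : ℕ∞) φ)
    (hφbij : Set.BijOn φ Set.univ (Set.Ioo (-(Real.pi / 4)) (Real.pi / 4)))
    (hφ' : ∀ z, deriv φ z ≠ 0)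
    (X Y : E3 → E3)
    (hXdef : ∀ p, X p = (0, 1, 1))
    (hYdef : ∀ p, Y p = (Real.sin (φ p.2.2), Real.cos (φ p.2.2), 0)) :
    (∀ p, dot3 (X p) (Y p) = Real.cos (φ p.2.2) ∧ 0 < dot3 (X p) (Y p)) ∧
    ¬ ∃ (α : E3 → E3 →L[ℝ] ℝ) (lam : E3 → ℝ),
        ContDiff ℝ (⊤ : ℕ∞) α ∧ Periodic2 α ∧
        (∀ p, wedge12 α (dOne α) p e1 e2 e3 ≠ 0) ∧
        (∀ p, 0 < lam p) ∧
        (∀ p, α p (lam p • X p) = 1) ∧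
        (∀ p v, dOne α p (lam p • X p) v = 0) := by
  have hπ2 : (0:ℝ) < 2 * Real.pi := by positivity
  constructor
  · -- Part 1 : the inner product is `cos (φ z) > 0`
    intro p
    have hmem := hφbij.mapsTo (Set.mem_univ p.2.2)
    have hcos : 0 < Real.cos (φ p.2.2) := by
      apply Real.cos_pos_of_mem_Ioo
      constructor
      · have := hmem.1; linarith [Real.pi_pos]
      · have := hmem.2; linarith [Real.pi_pos]
    refine ⟨?_, ?_⟩
    · rw [hXdef, hYdef]; simp [dot3]
    · rw [hXdef, hYdef]; simpa [dot3] using hcos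
  · -- Part 2 : no contact form with Reeb field proportional to `X`
    rintro ⟨α, lam, hsm, hper, hcontact, hlam, hαR, hdR⟩
    -- basic smoothness facts
    have hg1 : ContDiff ℝ (⊤ : ℕ∞) (fun q => α q e1) := hsm.clm_apply contDiff_const
    have hg2 : ContDiff ℝ (⊤ : ℕ∞) (fun q => α q e2) := hsm.clm_apply contDiff_const
    have hg3 : ContDiff ℝ (⊤ : ℕ∞) (fun q => α q e3) := hsm.clm_apply contDiff_const
    have d1 : Differentiable ℝ (fun q => α q e1) := hg1.differentiable (by simp)
    have d2 : Differentiable ℝ (fun q => α q e2) := hg2.differentiable (by simp)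
    have d3 : Differentiable ℝ (fun q => α q e3) := hg3.differentiable (by simp)
    -- the Reeb field decomposed
    have hXe : ∀ p, (lam p • X p : E3) = lam p • e2 + lam p • e3 := by
      intro p; rw [hXdef]; simp [e2, e3, Prod.ext_iff]
    have hdlin : ∀ (p v : E3) (c : ℝ),
        dOne α p (c • e2 + c • e3) v = c * dOne α p e2 v + c * dOne α p e3 v := by
      intro p v c
      have hfun : (fun y => α y (c • e2 + c • e3)) =
          (fun y => c * α y e2 + c * α y e3) := by
        funext y; simp [smul_eq_mul]
      rw [dOne, dOne, dOne, hfun]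
      rw [fderiv_fun_add ((d2 p).const_mul c) ((d3 p).const_mul c),
        fderiv_const_mul (d2 p) c, fderiv_const_mul (d3 p) c]
      simp [smul_eq_mul]
      ring
    -- `ι_R dα = 0` gives `dα(e2,·) + dα(e3,·) = 0`
    have hsum0 : ∀ p v, dOne α p e2 v + dOne α p e3 v = 0 := by
      intro p v
      have h := hdR p v
      rw [hXe p, hdlin] at h
      have h2 : lam p * (dOne α p e2 v + dOne α p e3 v) = 0 := by
        rw [mul_add]; exact h
      rcases mul_eq_zero.mp h2 with h3 | h3
      · exact absurd h3 (hlam p).ne'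
      · exact h3
    set W : E3 → ℝ := fun p => dOne α p e1 e2 with hWdef
    have hanti : ∀ p u v, dOne α p u v = - dOne α p v u := by
      intro p u v; rw [dOne, dOne]; ring
    -- `W` never vanishes (from the contact condition)
    have hWne : ∀ p, W p ≠ 0 := by
      intro p hW0
      apply hcontact p
      have h33 : dOne α p e3 e3 = 0 := by rw [dOne]; ring
      have h23 : dOne α p e2 e3 = 0 := by have := hsum0 p e3; linarith
      have h13 : dOne α p e1 e3 = - dOne α p e1 e2 := by
        have ha := hanti p e1 e3
        have hb := hsum0 p e1
        have hc := hanti p e2 e1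
        have hd := hanti p e3 e1
        linarith
      have hW0' : dOne α p e1 e2 = 0 := hW0
      rw [wedge12, h23, h13, hW0']
      ring
    -- continuity of `W`
    have hfd2 : Continuous (fderiv ℝ (fun q => α q e2)) :=
      (hg2.fderiv_right (m := (⊤ : ℕ∞)) (by simp)).continuous
    have hfd1 : Continuous (fderiv ℝ (fun q => α q e1)) :=
      (hg1.fderiv_right (m := (⊤ : ℕ∞)) (by simp)).continuous
    have hWeq : W = fun p =>
        fderiv ℝ (fun q => α q e2) p e1 - fderiv ℝ (fun q => α q e1) p e2 := rfl
    have hWcont : Continuous W := by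
      rw [hWeq]
      exact (hfd2.clm_apply continuous_const).sub (hfd1.clm_apply continuous_const)
    -- the coordinate inclusion maps
    have hplane : Continuous (fun q : ℝ × ℝ => ((q.1, q.2, 0) : E3)) :=
      continuous_fst.prodMk (continuous_snd.prodMk continuous_const)
    -- ∂ₓ-derivative of `x ↦ α (x,y,0) e2`
    have hderx : ∀ y x : ℝ, HasDerivAt (fun t : ℝ => α (t, y, 0) e2)
        (fderiv ℝ (fun q => α q e2) (x, y, 0) e1) x := by
      intro y x
      have hι : HasDerivAt (fun t : ℝ => ((t, y, 0) : E3)) ((1,0,0) : E3) x :=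
        HasDerivAt.prodMk (hasDerivAt_id x) (hasDerivAt_const x ((y : ℝ), (0:ℝ)))
      exact (d2 ((x,y,0) : E3)).hasFDerivAt.comp_hasDerivAt x hι
    -- ∂_y-derivative of `y ↦ α (x,y,0) e1`
    have hdery : ∀ x y : ℝ, HasDerivAt (fun t : ℝ => α (x, t, 0) e1)
        (fderiv ℝ (fun q => α q e1) (x, y, 0) e2) y := by
      intro x y
      have hι : HasDerivAt (fun t : ℝ => ((x, t, 0) : E3)) ((0,1,0) : E3) y :=
        HasDerivAt.prodMk (hasDerivAt_const y (x : ℝ)) (HasDerivAt.prodMk (hasDerivAt_id y) (hasDerivAt_const y (0:ℝ)))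
      exact (d1 ((x,y,0) : E3)).hasFDerivAt.comp_hasDerivAt y hι
    -- continuity of the two partial-derivative fields on the plane `z = 0`
    have hFxcont : Continuous (fun q : ℝ × ℝ =>
        fderiv ℝ (fun r => α r e2) (q.1, q.2, 0) e1) :=
      ((hfd2.comp hplane).clm_apply continuous_const)
    have hGycont : Continuous (fun q : ℝ × ℝ =>
        fderiv ℝ (fun r => α r e1) (q.1, q.2, 0) e2) :=
      ((hfd1.comp hplane).clm_apply continuous_const)
    -- FTC in the x-direction, using periodicity
    have hintx : ∀ y : ℝ, (∫ x in (0:ℝ)..(2*Real.pi),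
        fderiv ℝ (fun q => α q e2) (x, y, 0) e1) = 0 := by
      intro y
      have hintg : IntervalIntegrable
          (fun x : ℝ => fderiv ℝ (fun q => α q e2) (x, y, 0) e1) volume 0 (2*Real.pi) :=
        (hFxcont.comp (continuous_id.prodMk continuous_const)).intervalIntegrable _ _
      rw [intervalIntegral.integral_eq_sub_of_hasDerivAt (fun x _ => hderx y x) hintg]
      have hp := (hper ((0:ℝ), y, (0:ℝ))).1
      have he : (((0:ℝ), y, (0:ℝ)) : E3) + ((2*Real.pi : ℝ), 0, 0)
          = ((2*Real.pi : ℝ), y, (0:ℝ)) := by simp [Prod.ext_iff]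
      rw [he] at hp
      rw [hp, sub_self]
    -- FTC in the y-direction, using periodicity
    have hinty : ∀ x : ℝ, (∫ y in (0:ℝ)..(2*Real.pi),
        fderiv ℝ (fun q => α q e1) (x, y, 0) e2) = 0 := by
      intro x
      have hintg : IntervalIntegrable
          (fun y : ℝ => fderiv ℝ (fun q => α q e1) (x, y, 0) e2) volume 0 (2*Real.pi) :=
        (hGycont.comp (continuous_const.prodMk continuous_id)).intervalIntegrable _ _
      rw [intervalIntegral.integral_eq_sub_of_hasDerivAt (fun y _ => hdery x y) hintg]
      have hp := (hper ((x:ℝ), (0:ℝ), (0:ℝ))).2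
      have he : (((x:ℝ), (0:ℝ), (0:ℝ)) : E3) + ((0:ℝ), 2*Real.pi, 0)
          = ((x:ℝ), (2*Real.pi : ℝ), (0:ℝ)) := by simp [Prod.ext_iff]
      rw [he] at hp
      rw [hp, sub_self]
    -- Fubini : the iterated integral of `∂_y (α e1)` vanishes
    have h0le : (0:ℝ) ≤ 2*Real.pi := le_of_lt hπ2
    have hswap : (∫ y in (0:ℝ)..(2*Real.pi), ∫ x in (0:ℝ)..(2*Real.pi),
        fderiv ℝ (fun q => α q e1) (x, y, 0) e2) = 0 := by
      simp only [intervalIntegral.integral_of_le h0le]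
      set I := Set.Ioc (0:ℝ) (2*Real.pi) with hI
      have hGu : Continuous (Function.uncurry fun y x : ℝ =>
          fderiv ℝ (fun q => α q e1) (x, y, 0) e2) :=
        hGycont.comp (continuous_snd.prodMk continuous_fst)
      have hint : Integrable (Function.uncurry fun y x : ℝ =>
          fderiv ℝ (fun q => α q e1) (x, y, 0) e2)
          ((volume.restrict I).prod (volume.restrict I)) := by
        rw [Measure.prod_restrict, ← Measure.volume_eq_prod]
        have hK : IsCompact (Set.Icc (0:ℝ) (2*Real.pi) ×ˢ Set.Icc (0:ℝ) (2*Real.pi)) :=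
          isCompact_Icc.prod isCompact_Icc
        exact (hGu.continuousOn.integrableOn_compact hK).mono_set
          (Set.prod_mono Set.Ioc_subset_Icc_self Set.Ioc_subset_Icc_self)
      rw [MeasureTheory.integral_integral_swap hint]
      have hz : ∀ x : ℝ, (∫ y in I, fderiv ℝ (fun q => α q e1) (x, y, 0) e2) = 0 := by
        intro x
        rw [← intervalIntegral.integral_of_le h0le]
        exact hinty x
      simp [hz]
    -- the inner integral of `W` equals minus the `∂_y` term
    have hWxint : ∀ y : ℝ, IntervalIntegrable (fun x : ℝ => W (x, y, 0)) volume 0 (2*Real.pi) :=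
      fun y => ((hWcont.comp hplane).comp
        (continuous_id.prodMk continuous_const)).intervalIntegrable _ _
    have hinner : ∀ y : ℝ, (∫ x in (0:ℝ)..(2*Real.pi), W (x, y, 0))
        = - ∫ x in (0:ℝ)..(2*Real.pi), fderiv ℝ (fun q => α q e1) (x, y, 0) e2 := by
      intro y
      have heqf : ∀ x : ℝ, W (x, y, 0) =
          fderiv ℝ (fun q => α q e2) (x, y, 0) e1
            - fderiv ℝ (fun q => α q e1) (x, y, 0) e2 := fun x => rfl
      have hi1 : IntervalIntegrable
          (fun x : ℝ => fderiv ℝ (fun q => α q e2) (x, y, 0) e1) volume 0 (2*Real.pi) :=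
        (hFxcont.comp (continuous_id.prodMk continuous_const)).intervalIntegrable _ _
      have hi2 : IntervalIntegrable
          (fun y' : ℝ => fderiv ℝ (fun q => α q e1) (y', y, 0) e2) volume 0 (2*Real.pi) :=
        (hGycont.comp (continuous_id.prodMk continuous_const)).intervalIntegrable _ _
      calc (∫ x in (0:ℝ)..(2*Real.pi), W (x, y, 0))
          = ∫ x in (0:ℝ)..(2*Real.pi),
              (fderiv ℝ (fun q => α q e2) (x, y, 0) e1
                - fderiv ℝ (fun q => α q e1) (x, y, 0) e2) := by
            simp_rw [heqf]
        _ = (∫ x in (0:ℝ)..(2*Real.pi), fderiv ℝ (fun q => α q e2) (x, y, 0) e1)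
              - ∫ x in (0:ℝ)..(2*Real.pi), fderiv ℝ (fun q => α q e1) (x, y, 0) e2 :=
            intervalIntegral.integral_sub hi1 hi2
        _ = - ∫ x in (0:ℝ)..(2*Real.pi), fderiv ℝ (fun q => α q e1) (x, y, 0) e2 := by
            rw [hintx y]; ring
    -- the double integral of `W` over the torus slice vanishes
    have hD0 : (∫ y in (0:ℝ)..(2*Real.pi), ∫ x in (0:ℝ)..(2*Real.pi), W (x, y, 0)) = 0 := by
      simp_rw [hinner]
      rw [intervalIntegral.integral_neg, hswap, neg_zero]
    -- continuity of the inner integral as a function of `y`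
    have hcy : Continuous (fun y : ℝ => ∫ x in (0:ℝ)..(2*Real.pi), W (x, y, 0)) := by
      apply intervalIntegral.continuous_parametric_intervalIntegral_of_continuous'
        (f := fun y x : ℝ => W (x, y, 0)) (μ := volume)
      exact (hWcont.comp hplane).comp (continuous_snd.prodMk continuous_fst)
    -- `W` has a constant sign, contradiction
    rcases lt_or_gt_of_ne (hWne ((0:ℝ),(0:ℝ),(0:ℝ))) with hneg | hpos
    · have hall : ∀ p, W p < 0 := by
        intro p
        by_contra h
        push_neg at h
        obtain ⟨q, hq⟩ := intermediate_value_univ₂ (a := ((0:ℝ),(0:ℝ),(0:ℝ))) (b := p)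
          hWcont continuous_const (le_of_lt hneg) h
        exact hWne q hq
      have hneg1 : ∀ y : ℝ, (∫ x in (0:ℝ)..(2*Real.pi), W (x, y, 0)) < 0 := by
        intro y
        have hpos' : (0:ℝ) < ∫ x in (0:ℝ)..(2*Real.pi), -W (x, y, 0) :=
          intervalIntegral.intervalIntegral_pos_of_pos ((hWxint y).neg)
            (fun x => by simpa using hall ((x:ℝ), y, 0)) hπ2
        rw [intervalIntegral.integral_neg] at hpos'
        linarith
      have hDneg : (∫ y in (0:ℝ)..(2*Real.pi), ∫ x in (0:ℝ)..(2*Real.pi), W (x, y, 0)) < 0 := by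
        have hpos' : (0:ℝ) < ∫ y in (0:ℝ)..(2*Real.pi),
            -∫ x in (0:ℝ)..(2*Real.pi), W (x, y, 0) :=
          intervalIntegral.intervalIntegral_pos_of_pos
            ((hcy.neg).intervalIntegrable _ _) (fun y => by simpa using hneg1 y) hπ2
        rw [intervalIntegral.integral_neg] at hpos'
        linarith
      exact absurd hD0 (ne_of_lt hDneg)
    · have hall : ∀ p, 0 < W p := by
        intro p
        by_contra h
        push_neg at h
        obtain ⟨q, hq⟩ := intermediate_value_univ₂ (a := p) (b := ((0:ℝ),(0:ℝ),(0:ℝ)))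
          hWcont continuous_const h (le_of_lt hpos)
        exact hWne q hq
      have hpos1 : ∀ y : ℝ, (0:ℝ) < ∫ x in (0:ℝ)..(2*Real.pi), W (x, y, 0) := fun y =>
        intervalIntegral.intervalIntegral_pos_of_pos (hWxint y)
          (fun x => hall ((x:ℝ), y, 0)) hπ2
      have hDpos : (0:ℝ) < ∫ y in (0:ℝ)..(2*Real.pi), ∫ x in (0:ℝ)..(2*Real.pi), W (x, y, 0) :=
        intervalIntegral.intervalIntegral_pos_of_pos (hcy.intervalIntegrable _ _) hpos1 hπ2
      exact absurd hD0 (ne_of_gt hDpos)
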